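/- arXiv:1704.03190 — 6 statements merged into one kernel-verified Lean document; each statement's English description precedes it below -/
import Mathlib

section
/- Rodrigues' formula: for every nonzero p ∈ ℝ³, setting θ = ‖p‖₂, one has exp(p̂) = I₃ + (sin θ / θ)·p̂ + ((1 − cos θ)/θ²)·p̂². -/
open Matrix Real

noncomputable section

/-- The skew-symmetric "hat" matrix of a vector in ℝ³. -/
def hatm (p : Fin 3 → ℝ) : Matrix (Fin 3) (Fin 3) ℝ :=
  !![0, -p 2, p 1; p 2, 0, -p 0; -p 1, p 0, 0]

/-- The Euclidean (ℓ²) norm on ℝ³. -/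
def norm2 (p : Fin 3 → ℝ) : ℝ := Real.sqrt (∑ i, p i ^ 2)

/-!
Since `p̂ v = p × v`, the identity `p × (p × v) = (p ⬝ v) p - θ² v` gives `p̂ ^ 3 = -θ ^ 2 • p̂`.
Hence `p̂ ^ (2k+1) = (-θ²)^k • p̂` and `p̂ ^ (2k+2) = (-θ²)^k • p̂ ^ 2`, so the odd and the (shifted)
even parts of the exponential series are the Taylor series of `sin θ / θ` and `(1 - cos θ) / θ ^ 2`
times `p̂` and `p̂ ^ 2`.
-/

open scoped Nat

section PowThree

variable {R A : Type*} [CommSemiring R] [Semiring A] [Algebra R A] {X : A} {c : R}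

theorem pow_two_mul_add_one_of_pow_three_eq_smul (hX : X ^ 3 = c • X) (k : ℕ) :
    X ^ (2 * k + 1) = c ^ k • X := by
  induction k with
  | zero => simp
  | succ k ih =>
    rw [show 2 * (k + 1) + 1 = 2 + (2 * k + 1) by ring, pow_add, ih, mul_smul_comm,
      ← pow_succ, hX, smul_smul, ← pow_succ]

theorem pow_two_mul_add_two_of_pow_three_eq_smul (hX : X ^ 3 = c • X) (k : ℕ) :
    X ^ (2 * k + 2) = c ^ k • X ^ 2 := by
  rw [pow_succ, pow_two_mul_add_one_of_pow_three_eq_smul hX, smul_mul_assoc, ← sq]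

end PowThree

namespace Real

variable {θ : ℝ}

theorem hasSum_sin_div_self (hθ : θ ≠ 0) :
    HasSum (fun k : ℕ => (-θ ^ 2) ^ k / (2 * k + 1)!) (sin θ / θ) := by
  refine ((hasSum_sin θ).div_const θ).congr_fun fun k => ?_
  rw [neg_pow, ← pow_mul, pow_succ]
  field_simp

theorem hasSum_one_sub_cos_div_sq (hθ : θ ≠ 0) :
    HasSum (fun k : ℕ => (-θ ^ 2) ^ k / (2 * k + 2)!) ((1 - cos θ) / θ ^ 2) := by
  have hcos : HasSum (fun k : ℕ => (-1) ^ (k + 1) * θ ^ (2 * (k + 1)) / (2 * (k + 1))!)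
      (cos θ - 1) := by
    simpa using (hasSum_nat_add_iff' 1).2 (hasSum_cos θ)
  rw [← neg_sub]
  refine (hcos.neg.div_const (θ ^ 2)).congr_fun fun k => ?_
  rw [neg_pow, ← pow_mul, mul_add_one, pow_add, pow_succ (-1 : ℝ)]
  field_simp
  ring

end Real

theorem exp_eq_of_pow_three_eq_neg_sq_smul {A : Type*} [Ring A] [Algebra ℝ A]
    [TopologicalSpace A] [IsTopologicalRing A] [ContinuousSMul ℝ A] [T2Space A]
    {X : A} {θ : ℝ} (hθ : θ ≠ 0) (hX : X ^ 3 = -θ ^ 2 • X) :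
    NormedSpace.exp X = 1 + (sin θ / θ) • X + ((1 - cos θ) / θ ^ 2) • X ^ 2 := by
  have hodd : HasSum (fun k : ℕ => ((2 * k + 1)! : ℝ)⁻¹ • X ^ (2 * k + 1)) ((sin θ / θ) • X) :=
    ((hasSum_sin_div_self hθ).smul_const X).congr_fun fun k => by
      rw [pow_two_mul_add_one_of_pow_three_eq_smul hX, smul_smul, div_eq_inv_mul]
  have heven : HasSum (fun k : ℕ => ((2 * k)! : ℝ)⁻¹ • X ^ (2 * k))
      (1 + ((1 - cos θ) / θ ^ 2) • X ^ 2) := by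
    rw [← hasSum_nat_add_iff' 1, Finset.sum_range_one, mul_zero, pow_zero, Nat.factorial_zero,
      Nat.cast_one, inv_one, one_smul, add_sub_cancel_left]
    refine ((hasSum_one_sub_cos_div_sq hθ).smul_const (X ^ 2)).congr_fun fun k => ?_
    rw [mul_add_one, pow_two_mul_add_two_of_pow_three_eq_smul hX, smul_smul,
      div_eq_inv_mul]
  rw [NormedSpace.exp_eq_tsum ℝ, add_right_comm]
  exact (HasSum.even_add_odd (f := fun n => (n ! : ℝ)⁻¹ • X ^ n) heven hodd).tsum_eq

theorem norm2_sq (p : Fin 3 → ℝ) : norm2 p ^ 2 = ∑ i, p i ^ 2 :=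
  sq_sqrt (by positivity)

theorem norm2_ne_zero {p : Fin 3 → ℝ} (hp : p ≠ 0) : norm2 p ≠ 0 := by
  rw [← pow_ne_zero_iff two_ne_zero, norm2_sq]
  contrapose! hp
  ext i
  exact pow_eq_zero_iff two_ne_zero |>.1 <|
    congr_fun ((Fintype.sum_eq_zero_iff_of_nonneg fun j => sq_nonneg (p j)).1 hp) i

theorem hatm_pow_three (p : Fin 3 → ℝ) : hatm p ^ 3 = -norm2 p ^ 2 • hatm p := by
  rw [norm2_sq, Fin.sum_univ_three]
  ext i j
  fin_cases i <;> fin_cases j <;>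
    simp [hatm, pow_succ, Matrix.mul_apply, Fin.sum_univ_three] <;> ring

/-- Rodrigues' formula. -/
theorem rodrigues_formula (p : Fin 3 → ℝ) (hp : p ≠ 0) :
    NormedSpace.exp (hatm p) =
      1 + (Real.sin (norm2 p) / norm2 p) • hatm p
        + ((1 - Real.cos (norm2 p)) / norm2 p ^ 2) • hatm p ^ 2 :=
  exp_eq_of_pow_three_eq_neg_sq_smul (norm2_ne_zero hp) (hatm_pow_three p)
end
end

section
/- The exponential map from 𝔰𝔬(3) to SO(3) is surjective: for every R ∈ SO(3) there exists a skew-symmetric matrix A ∈ ℝ^{3×3} (i.e., Aᵀ = −A) such that exp(A) = R. -/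
open Matrix Real

noncomputable section

/-! An orientation-preserving orthogonal map in odd dimension fixes a line, because
`det (R - 1) = det ((R - 1) Rᵀ) = det (1 - Rᵀ) = -det (R - 1)`. Conjugating by an orthogonal
matrix that moves this axis to `e₂` turns `R ∈ SO(3)` into `diag(r_θ, 1)` with `r_θ` a plane
rotation. That matrix is the image of `(e^{iθ}, 1)` under the real algebra embedding
`ℂ × ℝ → M₃(ℝ)`, and algebra homomorphisms commute with `exp`, so it is the exponential of the
image of `(iθ, 0)`, which is skew-symmetric. -/

section OrthogonalGroup

variable {n : Type*} [Fintype n] [DecidableEq n]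

theorem det_sub_one_eq_zero_of_mem_specialOrthogonalGroup (hn : Odd (Fintype.card n))
    {R : Matrix n n ℝ} (hR : R ∈ specialOrthogonalGroup n ℝ) : (R - 1).det = 0 := by
  obtain ⟨hO, hdet⟩ := mem_specialOrthogonalGroup_iff.1 hR
  have hRRt : (R - 1) * Rᵀ = -(R - 1)ᵀ := by
    rw [sub_mul, (mem_orthogonalGroup_iff _ _).1 hO, one_mul, transpose_sub, transpose_one,
      neg_sub]
  have := congrArg det hRRt
  rw [det_mul, det_transpose, hdet, mul_one, det_neg, det_transpose, hn.neg_one_pow] at this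
  linarith

theorem transpose_mulVec_eq_self {S : Matrix n n ℝ} (hS : S ∈ orthogonalGroup n ℝ)
    {v : n → ℝ} (hv : S *ᵥ v = v) : Sᵀ *ᵥ v = v := by
  conv_lhs => rw [← hv]
  rw [mulVec_mulVec, (mem_orthogonalGroup_iff' _ _).1 hS, one_mulVec]

theorem transpose_mul_mul_mem_specialOrthogonalGroup {P R : Matrix n n ℝ}
    (hP : P ∈ orthogonalGroup n ℝ) (hR : R ∈ specialOrthogonalGroup n ℝ) :
    Pᵀ * R * P ∈ specialOrthogonalGroup n ℝ := by
  rw [mem_specialOrthogonalGroup_iff] at hR ⊢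
  refine ⟨mul_mem (mul_mem (transpose_mem_unitaryGroup_iff.2 hP) hR.1) hP, ?_⟩
  rw [det_mul, det_mul, hR.2, mul_one, ← det_mul, (mem_orthogonalGroup_iff' _ _).1 hP, det_one]

theorem exists_orthogonal_mulVec_single_eq_smul (i : n) {v : n → ℝ} (hv : v ≠ 0) :
    ∃ P ∈ orthogonalGroup n ℝ, ∃ c : ℝ, P *ᵥ Pi.single i 1 = c • v := by
  set w : EuclideanSpace ℝ n := WithLp.toLp 2 v
  have hw : ‖w‖ ≠ 0 := by simpa [w] using hv
  have hunit : Orthonormal ℝ (({i} : Set n).domRestrict fun _ ↦ ‖w‖⁻¹ • w) := by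
    refine ⟨fun _ ↦ ?_, fun j k hjk ↦ (hjk (Subtype.ext (j.2.trans k.2.symm))).elim⟩
    simp [norm_smul, hw]
  obtain ⟨b, hb⟩ := hunit.exists_orthonormalBasis_extension_of_card_eq (by simp)
  refine ⟨(EuclideanSpace.basisFun n ℝ).toBasis.toMatrix b,
    (EuclideanSpace.basisFun n ℝ).toMatrix_orthonormalBasis_mem_orthogonal b, ‖w‖⁻¹, ?_⟩
  ext k
  simp [mulVec_single, Module.Basis.toMatrix_apply, hb i rfl, w]

theorem exists_orthogonal_conj_mulVec_single_eq_self (hn : Odd (Fintype.card n))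
    {R : Matrix n n ℝ} (hR : R ∈ specialOrthogonalGroup n ℝ) (i : n) :
    ∃ P ∈ orthogonalGroup n ℝ, (Pᵀ * R * P) *ᵥ Pi.single i 1 = Pi.single i 1 := by
  obtain ⟨v, hv0, hv⟩ :=
    exists_mulVec_eq_zero_iff.2 (det_sub_one_eq_zero_of_mem_specialOrthogonalGroup hn hR)
  rw [sub_mulVec, one_mulVec, sub_eq_zero] at hv
  obtain ⟨P, hP, c, hPc⟩ := exists_orthogonal_mulVec_single_eq_smul i hv0
  refine ⟨P, hP, ?_⟩
  rw [← mulVec_mulVec, ← mulVec_mulVec, hPc, mulVec_smul, hv, ← hPc, mulVec_mulVec,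
    (mem_orthogonalGroup_iff' _ _).1 hP, one_mulVec]

end OrthogonalGroup

theorem of_mem_specialOrthogonalGroup_fin_three_iff {a b c d : ℝ} :
    !![a, b, 0; c, d, 0; 0, 0, 1] ∈ specialOrthogonalGroup (Fin 3) ℝ ↔
      !![a, b; c, d] ∈ specialOrthogonalGroup (Fin 2) ℝ := by
  simp [mem_specialOrthogonalGroup_iff, mem_orthogonalGroup_iff, ← Matrix.ext_iff,
    Fin.forall_fin_succ, det_fin_three, det_fin_two, vecMul, dotProduct, Fin.sum_univ_succ]

theorem eq_block_of_mulVec_single_two_eq_self {S : Matrix (Fin 3) (Fin 3) ℝ}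
    (hS : S ∈ orthogonalGroup (Fin 3) ℝ) (hfix : S *ᵥ Pi.single 2 1 = Pi.single 2 1) :
    S = !![S 0 0, S 0 1, 0; S 1 0, S 1 1, 0; 0, 0, 1] := by
  have hcol := congrFun hfix
  have hrow := congrFun (transpose_mulVec_eq_self hS hfix)
  simp [mulVec_single, Fin.forall_fin_succ] at hcol hrow
  ext i j; fin_cases i <;> fin_cases j <;> simp [*]

def rotHom : ℂ × ℝ →ₐ[ℝ] Matrix (Fin 3) (Fin 3) ℝ where
  toFun p := !![p.1.re, -p.1.im, 0; p.1.im, p.1.re, 0; 0, 0, p.2]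
  map_one' := by
    ext i j; fin_cases i <;> fin_cases j <;> simp [one_apply]
  map_mul' p q := by
    ext i j; fin_cases i <;> fin_cases j <;> simp [mul_apply, Fin.sum_univ_three] <;> ring
  map_zero' := by
    ext i j; fin_cases i <;> fin_cases j <;> simp
  map_add' p q := by
    ext i j; fin_cases i <;> fin_cases j <;> simp [add_comm]
  commutes' r := by
    ext i j; fin_cases i <;> fin_cases j <;> simp [algebraMap_matrix_apply]

theorem rotHom_apply (p : ℂ × ℝ) :
    rotHom p = !![p.1.re, -p.1.im, 0; p.1.im, p.1.re, 0; 0, 0, p.2] := rfl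

theorem transpose_rotHom (p : ℂ × ℝ) : (rotHom p)ᵀ = rotHom (star p) := by
  ext i j; fin_cases i <;> fin_cases j <;> simp [rotHom_apply]

-- `exp` only depends on the topology; a normed algebra structure is needed to apply `map_exp`.
open scoped Matrix.Norms.Operator in
theorem exp_rotHom (p : ℂ × ℝ) : NormedSpace.exp (rotHom p) = rotHom (NormedSpace.exp p) :=
  (NormedSpace.map_exp rotHom.toRingHom rotHom.toLinearMap.continuous_of_finiteDimensional p).symm

theorem exp_prod_mk_zero (z : ℂ) : NormedSpace.exp ((z, 0) : ℂ × ℝ) = (Complex.exp z, 1) := by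
  ext1
  · rw [Prod.fst_exp, Complex.exp_eq_exp_ℂ]
  · rw [Prod.snd_exp, NormedSpace.exp_zero]

theorem exists_eq_rotHom_of_mulVec_single_two_eq_self {S : Matrix (Fin 3) (Fin 3) ℝ}
    (hS : S ∈ specialOrthogonalGroup (Fin 3) ℝ) (hfix : S *ᵥ Pi.single 2 1 = Pi.single 2 1) :
    ∃ θ : ℝ, S = rotHom (Complex.exp (θ * Complex.I), 1) := by
  have hS_eq := eq_block_of_mulVec_single_two_eq_self hS.1 hfix
  rw [hS_eq, of_mem_specialOrthogonalGroup_fin_three_iff,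
    of_mem_specialOrthogonalGroup_fin_two_iff] at hS
  obtain ⟨hdiag, hoff, hsq⟩ := hS
  set z : ℂ := ⟨S 0 0, S 1 0⟩
  have hz : ‖z‖ = 1 := by
    rw [hoff, neg_sq] at hsq
    rw [Complex.norm_def, Complex.normSq_mk, ← sq, ← sq, hsq, Real.sqrt_one]
  have hexp : Complex.exp (z.arg * Complex.I) = z := by
    simpa [hz] using Complex.norm_mul_exp_arg_mul_I z
  refine ⟨z.arg, ?_⟩
  rw [hexp, hS_eq]
  ext i j; fin_cases i <;> fin_cases j <;> simp [rotHom_apply, z, hdiag, hoff]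

/-- the exponential map from 𝔰𝔬(3) to SO(3) is surjective. -/
theorem exp_so3_surjective (R : Matrix (Fin 3) (Fin 3) ℝ)
    (hR : R * Rᵀ = 1) (hdet : R.det = 1) :
    ∃ A : Matrix (Fin 3) (Fin 3) ℝ, Aᵀ = -A ∧ NormedSpace.exp A = R := by
  have hRmem : R ∈ specialOrthogonalGroup (Fin 3) ℝ := ⟨(mem_orthogonalGroup_iff _ _).2 hR, hdet⟩
  obtain ⟨P, hP, hfix⟩ := exists_orthogonal_conj_mulVec_single_eq_self (by decide) hRmem 2
  obtain ⟨θ, hθ⟩ := exists_eq_rotHom_of_mulVec_single_two_eq_self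
    (transpose_mul_mul_mem_specialOrthogonalGroup hP hRmem) hfix
  have hPPt : P * Pᵀ = 1 := (mem_orthogonalGroup_iff _ _).1 hP
  have hPtP : Pᵀ * P = 1 := (mem_orthogonalGroup_iff' _ _).1 hP
  refine ⟨P * rotHom ((θ : ℂ) * Complex.I, 0) * Pᵀ, ?_, ?_⟩
  · have hstar : star ((θ : ℂ) * Complex.I, (0 : ℝ)) = -((θ : ℂ) * Complex.I, 0) := by
      ext <;> simp
    rw [transpose_mul, transpose_mul, transpose_transpose, transpose_rotHom, hstar, map_neg,
      ← mul_assoc, mul_neg, neg_mul]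
  · have hPinv : P⁻¹ = Pᵀ := inv_eq_right_inv hPPt
    rw [← hPinv, exp_conj _ _ ⟨⟨P, Pᵀ, hPPt, hPtP⟩, rfl⟩, hPinv, exp_rotHom, exp_prod_mk_zero,
      ← hθ, ← mul_assoc, ← mul_assoc, hPPt, one_mul, mul_assoc, hPPt, mul_one]
end
end

section
/- The function c(θ) = sinc(θ)/sinc²(θ/2) is concave on the interval [0, π], takes values in [0, 1] on [0, π], satisfies c(0) = 1 and c(π) = 0, and is strictly positive on [0, π). -/
/-!
On `(0, 2π)` the half-angle formulas turn `c` into `θ sin θ / (2 (1 - cos θ)) = (θ/2) cot (θ/2)`,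
whose derivative is `(sin θ - θ) / (2 (1 - cos θ))` and whose second derivative is
`(θ sin θ - 2 (1 - cos θ)) / (2 (1 - cos θ)²)`. On `[0, π]` the single inequality
`θ sin θ ≤ 2 (1 - cos θ)`, i.e. `x cos x ≤ sin x` for `x = θ/2 ∈ [0, π/2]`, makes this second
derivative nonpositive and also gives `c ≤ 1`.
-/

open Matrix Real

noncomputable section

/-- The unnormalized sinc function: α · sinc α = sin α, sinc 0 = 1. -/
def sinc (α : ℝ) : ℝ := if α = 0 then 1 else Real.sin α / α

/-- c(θ) = sinc(θ)/sinc²(θ/2). -/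
def cfun (θ : ℝ) : ℝ := _root_.sinc θ / _root_.sinc (θ / 2) ^ 2

open Set

namespace Real

lemma sinc_pos_of_abs_lt_pi {x : ℝ} (hx : |x| < π) : 0 < Real.sinc x := by
  rcases eq_or_ne x 0 with rfl | hx0
  · simp
  have habs : Real.sinc x = Real.sinc |x| := by
    rcases abs_choice x with h | h <;> rw [h]
    rw [sinc_neg]
  rw [habs, sinc_of_ne_zero (abs_ne_zero.2 hx0)]
  exact div_pos (sin_pos_of_pos_of_lt_pi (abs_pos.2 hx0) hx) (abs_pos.2 hx0)

lemma cos_lt_one_of_pos_of_lt_two_pi {θ : ℝ} (h0 : 0 < θ) (h : θ < 2 * π) : cos θ < 1 :=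
  (cos_le_one θ).lt_of_ne fun h1 =>
    h0.ne' ((cos_eq_one_iff_of_lt_of_lt (by linarith [pi_pos]) h).1 h1)

lemma sin_eq_two_mul_sin_half_mul_cos_half (θ : ℝ) :
    sin θ = 2 * sin (θ / 2) * cos (θ / 2) := by
  rw [← sin_two_mul, mul_div_cancel₀ θ two_ne_zero]

lemma one_sub_cos_eq_two_mul_sin_half_sq (θ : ℝ) : 1 - cos θ = 2 * sin (θ / 2) ^ 2 := by
  rw [← mul_div_cancel₀ θ two_ne_zero, cos_two_mul_eq_one_sub, mul_div_cancel₀ θ two_ne_zero]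
  ring

lemma mul_cos_le_sin {x : ℝ} (h0 : 0 ≤ x) (h : x ≤ π / 2) : x * cos x ≤ sin x := by
  rcases h.lt_or_eq with h | rfl
  · have hcos : 0 < cos x := cos_pos_of_mem_Ioo ⟨by linarith [pi_pos], h⟩
    have := le_tan h0 h
    rwa [tan_eq_sin_div_cos, le_div_iff₀ hcos] at this
  · simp

lemma mul_sin_le_two_mul_one_sub_cos {θ : ℝ} (h0 : 0 ≤ θ) (hπ : θ ≤ π) :
    θ * sin θ ≤ 2 * (1 - cos θ) := by
  have hhalf := mul_cos_le_sin (x := θ / 2) (by linarith) (by linarith)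
  have hsin : 0 ≤ sin (θ / 2) := sin_nonneg_of_nonneg_of_le_pi (by linarith) (by linarith)
  rw [sin_eq_two_mul_sin_half_mul_cos_half, one_sub_cos_eq_two_mul_sin_half_sq]
  nlinarith [mul_le_mul_of_nonneg_left hhalf hsin]

lemma hasDerivAt_mul_sin_div_one_sub_cos {θ : ℝ} (hθ : cos θ ≠ 1) :
    HasDerivAt (fun x => x * sin x / (2 * (1 - cos x)))
      ((sin θ - θ) / (2 * (1 - cos θ))) θ := by
  have hden : 2 * (1 - cos θ) ≠ 0 := by
    have := sub_ne_zero.2 (Ne.symm hθ); positivity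
  have h := ((hasDerivAt_id' θ).mul (hasDerivAt_sin θ)).div
    (((hasDerivAt_const θ (1 : ℝ)).sub (hasDerivAt_cos θ)).const_mul 2) hden
  refine h.congr_deriv ?_
  simp only [Pi.mul_apply, Pi.sub_apply]
  field_simp
  linear_combination -θ * sin_sq_add_cos_sq θ

lemma hasDerivAt_sin_sub_self_div_one_sub_cos {θ : ℝ} (hθ : cos θ ≠ 1) :
    HasDerivAt (fun x => (sin x - x) / (2 * (1 - cos x)))
      ((θ * sin θ - 2 * (1 - cos θ)) / (2 * (1 - cos θ) ^ 2)) θ := by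
  have hden : 2 * (1 - cos θ) ≠ 0 := by
    have := sub_ne_zero.2 (Ne.symm hθ); positivity
  have h := ((hasDerivAt_sin θ).sub (hasDerivAt_id' θ)).div
    (((hasDerivAt_const θ (1 : ℝ)).sub (hasDerivAt_cos θ)).const_mul 2) hden
  refine h.congr_deriv ?_
  simp only [Pi.sub_apply]
  field_simp
  linear_combination -sin_sq_add_cos_sq θ

end Real

lemma sinc_eq_real_sinc : _root_.sinc = Real.sinc := rfl

lemma cfun_zero : cfun 0 = 1 := by
  simp [cfun, sinc_eq_real_sinc]

lemma cfun_pi : cfun π = 0 := by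
  rw [cfun, sinc_eq_real_sinc, sinc_of_ne_zero pi_ne_zero, sin_pi, zero_div, zero_div]

lemma cfun_eq_mul_sin_div_one_sub_cos {θ : ℝ} (h0 : 0 < θ) (h : θ < 2 * π) :
    cfun θ = θ * sin θ / (2 * (1 - cos θ)) := by
  have hsin : sin (θ / 2) ≠ 0 := (sin_pos_of_pos_of_lt_pi (by linarith) (by linarith)).ne'
  rw [cfun, sinc_eq_real_sinc, sinc_of_ne_zero h0.ne', sinc_of_ne_zero (by positivity),
    one_sub_cos_eq_two_mul_sin_half_sq, sin_eq_two_mul_sin_half_mul_cos_half]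
  field_simp

lemma continuousOn_cfun : ContinuousOn cfun (Ioo (-(2 * π)) (2 * π)) := by
  unfold cfun
  rw [sinc_eq_real_sinc]
  refine continuous_sinc.continuousOn.div
    ((continuous_sinc.comp (continuous_id.div_const 2)).continuousOn.pow 2) fun θ hθ => ?_
  refine pow_ne_zero 2 (sinc_pos_of_abs_lt_pi (abs_lt.2 ⟨?_, ?_⟩)).ne' <;> linarith [hθ.1, hθ.2]

lemma hasDerivAt_cfun {θ : ℝ} (h0 : 0 < θ) (h : θ < 2 * π) :
    HasDerivAt cfun ((sin θ - θ) / (2 * (1 - cos θ))) θ := by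
  refine (hasDerivAt_mul_sin_div_one_sub_cos (cos_lt_one_of_pos_of_lt_two_pi h0 h).ne)
    |>.congr_of_eventuallyEq ?_
  filter_upwards [Ioo_mem_nhds h0 h] with x hx using cfun_eq_mul_sin_div_one_sub_cos hx.1 hx.2

lemma concaveOn_cfun : ConcaveOn ℝ (Icc 0 π) cfun := by
  have hpi := pi_pos
  refine concaveOn_of_hasDerivWithinAt2_nonpos (f' := fun θ => (sin θ - θ) / (2 * (1 - cos θ)))
    (f'' := fun θ => (θ * sin θ - 2 * (1 - cos θ)) / (2 * (1 - cos θ) ^ 2)) (convex_Icc 0 π)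
    (continuousOn_cfun.mono fun θ hθ => ⟨by linarith [hθ.1], by linarith [hθ.2]⟩)
    (fun θ hθ => ?_) (fun θ hθ => ?_) (fun θ hθ => ?_) <;> simp only [interior_Icc] at hθ ⊢
  · exact (hasDerivAt_cfun hθ.1 (by linarith [hθ.2])).hasDerivWithinAt
  · exact (hasDerivAt_sin_sub_self_div_one_sub_cos
      (cos_lt_one_of_pos_of_lt_two_pi hθ.1 (by linarith [hθ.2])).ne).hasDerivWithinAt
  · exact div_nonpos_of_nonpos_of_nonneg
      (sub_nonpos.2 (mul_sin_le_two_mul_one_sub_cos hθ.1.le hθ.2.le)) (by positivity)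

lemma cfun_mem_Icc {θ : ℝ} (hθ : θ ∈ Icc 0 π) : cfun θ ∈ Icc 0 1 := by
  rcases hθ.1.eq_or_lt with rfl | h0
  · simp [cfun_zero]
  have hcos : 0 < 1 - cos θ :=
    sub_pos.2 (cos_lt_one_of_pos_of_lt_two_pi h0 (by linarith [hθ.2, pi_pos]))
  rw [cfun_eq_mul_sin_div_one_sub_cos h0 (by linarith [hθ.2, pi_pos])]
  refine ⟨div_nonneg (mul_nonneg h0.le (sin_nonneg_of_nonneg_of_le_pi h0.le hθ.2)) (by positivity),
    (div_le_one (by positivity)).2 (mul_sin_le_two_mul_one_sub_cos h0.le hθ.2)⟩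

lemma cfun_pos {θ : ℝ} (hθ : θ ∈ Ico 0 π) : 0 < cfun θ := by
  rcases hθ.1.eq_or_lt with rfl | h0
  · simp [cfun_zero]
  have hcos : 0 < 1 - cos θ :=
    sub_pos.2 (cos_lt_one_of_pos_of_lt_two_pi h0 (by linarith [hθ.2, pi_pos]))
  rw [cfun_eq_mul_sin_div_one_sub_cos h0 (by linarith [hθ.2, pi_pos])]
  have := sin_pos_of_pos_of_lt_pi h0 hθ.2
  positivity

/-- properties of c(θ) = sinc(θ)/sinc²(θ/2) on [0, π]. -/
theorem cfun_properties :
    ConcaveOn ℝ (Set.Icc 0 Real.pi) cfun ∧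
    (∀ θ ∈ Set.Icc (0 : ℝ) Real.pi, cfun θ ∈ Set.Icc (0 : ℝ) 1) ∧
    cfun 0 = 1 ∧ cfun Real.pi = 0 ∧
    (∀ θ ∈ Set.Ico (0 : ℝ) Real.pi, 0 < cfun θ) :=
  ⟨concaveOn_cfun, fun _ => cfun_mem_Icc, cfun_zero, cfun_pi, fun _ => cfun_pos⟩
end
end

section
/- Dissipation inequality for the signum protocol: let G be an undirected graph on n nodes with m edges and incidence matrix B (for an arbitrary orientation of the edges), let B̂ = B ⊗ I₃, and let x = (x₁,…,xₙ) ∈ ℝ^{3n} satisfy ‖xᵢ‖₂ < 2π for every i. Then for every sign-selection s ∈ ℝ^{3m} for B̂ᵀ x, one has xᵀ L_x B̂ s = xᵀ B̂ s ≥ 0; equivalently, xᵀ(−L_x B̂ s) ≤ 0. -/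
/-! The vector `x` is orthogonal to `x̂ v` and is an eigenvector, with eigenvalue `c + (1 - c) = 1`,
of the symmetric part of `Lₓ`; hence `xᵀ Lₓ = xᵀ` blockwise. Moving `B̂` across the inner product,
`xᵀ B̂ s = (B̂ᵀ x)ᵀ s` is a sum of terms `z · s` with `s = sign z` whenever `z ≠ 0`, each equal to
`|z| ≥ 0`. -/

open Matrix Real

noncomputable section

/-- The symmetric part L¹ₓ of the transition matrix (L¹₀ := I₃). -/
def L1mat (x : Fin 3 → ℝ) : Matrix (Fin 3) (Fin 3) ℝ :=
  if x = 0 then 1 else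
    cfun (norm2 x) • (1 : Matrix (Fin 3) (Fin 3) ℝ)
      + ((1 - cfun (norm2 x)) / norm2 x ^ 2) • vecMulVec x x

/-- The transition matrix Lₓ of the axis-angle kinematics (L₀ := I₃). -/
def Lmat (x : Fin 3 → ℝ) : Matrix (Fin 3) (Fin 3) ℝ :=
  if x = 0 then 1 else
    cfun (norm2 x) • (1 : Matrix (Fin 3) (Fin 3) ℝ)
      + ((1 - cfun (norm2 x)) / norm2 x ^ 2) • vecMulVec x x
      + (1 / 2 : ℝ) • hatm x

/-- `s` is a sign-selection for `z`: each component lies in [−1,1] and equals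
`sign (z ℓ)` whenever `z ℓ ≠ 0`. -/
def SignSel {k : Type*} (s z : k → ℝ) : Prop :=
  ∀ ℓ, s ℓ ∈ Set.Icc (-1 : ℝ) 1 ∧ (z ℓ ≠ 0 → s ℓ = Real.sign (z ℓ))

/-- Vector-valued (ℝ³-blocks) sign-selection, componentwise. -/
def SignSelV {m : ℕ} (s z : Fin m → Fin 3 → ℝ) : Prop :=
  ∀ e k, s e k ∈ Set.Icc (-1 : ℝ) 1 ∧ (z e k ≠ 0 → s e k = Real.sign (z e k))

lemma dotProduct_hatm_mulVec_self (x v : Fin 3 → ℝ) : x ⬝ᵥ hatm x *ᵥ v = 0 := by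
  simp [hatm, mulVec, dotProduct, Fin.sum_univ_three]
  ring

lemma norm2_sq_s11 (x : Fin 3 → ℝ) : norm2 x ^ 2 = x ⬝ᵥ x := by
  rw [norm2, Real.sq_sqrt (by positivity)]
  simp only [dotProduct, sq]

lemma dotProduct_Lmat_mulVec_self (x v : Fin 3 → ℝ) : x ⬝ᵥ Lmat x *ᵥ v = x ⬝ᵥ v := by
  by_cases hx : x = 0
  · simp [Lmat, hx]
  have hxx : x ⬝ᵥ x ≠ 0 := mt dotProduct_self_eq_zero.mp hx
  simp only [Lmat, if_neg hx, add_mulVec, smul_mulVec, one_mulVec, dotProduct_add,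
    dotProduct_smul, vecMulVec_mulVec, MulOpposite.smul_eq_mul_unop, MulOpposite.unop_op,
    dotProduct_hatm_mulVec_self, norm2_sq_s11, smul_eq_mul, mul_zero, add_zero]
  field_simp
  ring

lemma mul_nonneg_of_eq_sign {z s : ℝ} (h : z ≠ 0 → s = Real.sign z) : 0 ≤ z * s := by
  rcases eq_or_ne z 0 with rfl | hz
  · simp
  · rw [h hz, mul_comm]
    exact Real.sign_mul_nonneg z

lemma sum_sum_mul_nonneg_of_signSelV {m : ℕ} {s z : Fin m → Fin 3 → ℝ} (hs : SignSelV s z) :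
    0 ≤ ∑ e, ∑ k, z e k * s e k :=
  Finset.sum_nonneg fun e _ => Finset.sum_nonneg fun k _ => mul_nonneg_of_eq_sign (hs e k).2

lemma sum_dotProduct_sum_smul {α ι ε κ : Type*} [CommSemiring α] [Fintype ι] [Fintype ε]
    [Fintype κ] (B : Matrix ι ε α) (x : ι → κ → α) (s : ε → κ → α) :
    ∑ i, x i ⬝ᵥ ∑ e, B i e • s e = ∑ e, ∑ k, (∑ i, B i e * x i k) * s e k := by
  calc ∑ i, x i ⬝ᵥ ∑ e, B i e • s e
      = ∑ i, ∑ e, B i e * (x i ⬝ᵥ s e) := by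
        simp only [dotProduct_sum, dotProduct_smul, smul_eq_mul]
    _ = ∑ e, ∑ i, B i e * (x i ⬝ᵥ s e) := Finset.sum_comm
    _ = ∑ e, (∑ i, B i e • x i) ⬝ᵥ s e := by
        simp only [sum_dotProduct, smul_dotProduct, smul_eq_mul]
    _ = ∑ e, ∑ k, (∑ i, B i e * x i k) * s e k := by
        simp only [dotProduct, Finset.sum_apply, Pi.smul_apply, smul_eq_mul]

/-- The `i`-th block of `B̂ s` is `∑ e, B i e • s e`, and the `(e, k)` component of `B̂ᵀ x` is
`∑ i, B i e * x i k`. -/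
theorem dissipation_inequality_general {n m : ℕ}
    (B : Matrix (Fin n) (Fin m) ℝ)
    (x : Fin n → Fin 3 → ℝ)
    (s : Fin m → Fin 3 → ℝ)
    (hs : SignSelV s (fun e k => ∑ i, B i e * x i k)) :
    (∑ i, x i ⬝ᵥ (Lmat (x i)).mulVec (∑ e, B i e • s e))
        = ∑ i, x i ⬝ᵥ (∑ e, B i e • s e) ∧
    0 ≤ ∑ i, x i ⬝ᵥ (∑ e, B i e • s e) := by
  refine ⟨Finset.sum_congr rfl fun i _ => dotProduct_Lmat_mulVec_self (x i) _, ?_⟩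
  rw [sum_dotProduct_sum_smul]
  exact sum_sum_mul_nonneg_of_signSelV hs

/-- dissipation inequality for the signum protocol.
Here `te e`/`he e` are the tail/head of edge `e` (an arbitrary orientation of an
undirected graph), `B` is the incidence matrix, the `i`-th block of `B̂ s` is
`∑ e, B i e • s e`, and the `(e,k)` component of `B̂ᵀ x` is `∑ i, B i e * x i k`. -/
theorem dissipation_inequality {n m : ℕ}
    (te he : Fin m → Fin n) (hloop : ∀ e, te e ≠ he e)
    (B : Matrix (Fin n) (Fin m) ℝ)
    (hB : ∀ i e, B i e = if i = te e then 1 else if i = he e then -1 else 0)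
    (x : Fin n → Fin 3 → ℝ) (hx : ∀ i, norm2 (x i) < 2 * Real.pi)
    (s : Fin m → Fin 3 → ℝ)
    (hs : SignSelV s (fun e k => ∑ i, B i e * x i k)) :
    (∑ i, x i ⬝ᵥ (Lmat (x i)).mulVec (∑ e, B i e • s e))
        = ∑ i, x i ⬝ᵥ (∑ e, B i e • s e) ∧
    0 ≤ ∑ i, x i ⬝ᵥ (∑ e, B i e • s e) :=
  dissipation_inequality_general B x s hs
end
end

section
/- Argmax boundary-flow lemma: let G be a connected undirected graph on n nodes with m edges and incidence matrix B (for an arbitrary orientation of the edges), let y ∈ ℝⁿ be a non-constant vector, and let α = {i : yᵢ = max_ℓ y_ℓ} be its set of maximizers. Then for every sign-selection s ∈ ℝ^{m} for Bᵀ y, one has Σ_{i∈α} (B s)ᵢ ≥ 1. -/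
/-!
Writing `χ` for the indicator of the argmax set `α`, the quantity is
`χ ⬝ᵥ B s = (Bᵀ χ) ⬝ᵥ s = ∑ₑ (χ (tail e) - χ (head e)) s e`. An edge inside or outside `α`
contributes `0`; an edge crossing the cut joins a maximiser to a strictly smaller value, so the
sign-selection forces its contribution to be exactly `1`. Hence the sum counts the edges of
the cut `(α, αᶜ)`, and connectivity together with `∅ ≠ α ≠ univ` gives at least one of them.
-/

open Matrix Real

noncomputable section

open Finset

namespace SignSel

variable {k : Type*} {s z : k → ℝ}

lemma eq_one_of_pos (hs : SignSel s z) {ℓ : k} (h : 0 < z ℓ) : s ℓ = 1 := by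
  rw [(hs ℓ).2 h.ne', Real.sign_of_pos h]

lemma eq_neg_one_of_neg (hs : SignSel s z) {ℓ : k} (h : z ℓ < 0) : s ℓ = -1 := by
  rw [(hs ℓ).2 h.ne, Real.sign_of_neg h]

end SignSel

section Incidence

variable {V E : Type*} {te he : E → V}

lemma vecMul_incidence [Fintype V] [DecidableEq V] {B : Matrix V E ℝ}
    (hloop : ∀ e, te e ≠ he e)
    (hB : ∀ i e, B i e = if i = te e then 1 else if i = he e then -1 else 0)
    (f : V → ℝ) (e : E) : (f ᵥ* B) e = f (te e) - f (he e) := by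
  have hterm : ∀ i, f i * B i e =
      (if i = te e then f (te e) else 0) - (if i = he e then f (he e) else 0) := by
    intro i
    rw [hB]
    split_ifs with h₁ h₂ h₂
    · exact absurd (h₁ ▸ h₂) (hloop e)
    all_goals subst_vars; ring
  simp only [vecMul, dotProduct, hterm, sum_sub_distrib, sum_ite_eq', mem_univ, if_true]

lemma sum_mulVec_incidence [Fintype V] [DecidableEq V] [Fintype E] {B : Matrix V E ℝ}
    (hloop : ∀ e, te e ≠ he e)
    (hB : ∀ i e, B i e = if i = te e then 1 else if i = he e then -1 else 0)
    (S : Finset V) (s : E → ℝ) :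
    ∑ i ∈ S, (B *ᵥ s) i =
      ∑ e, ((if te e ∈ S then 1 else 0) - (if he e ∈ S then 1 else 0)) * s e := by
  have hχ : ∑ i ∈ S, (B *ᵥ s) i = (fun i => if i ∈ S then (1 : ℝ) else 0) ⬝ᵥ (B *ᵥ s) := by
    simp [dotProduct, ite_mul]
  rw [hχ, dotProduct_mulVec]
  simp only [dotProduct, vecMul_incidence hloop hB]

variable {S : Finset V} {y : V → ℝ} {s : E → ℝ}

lemma edge_flow_eq_ite_crosses [DecidableEq V] (hS : ∀ i ∈ S, ∀ j ∉ S, y j < y i)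
    (hs : SignSel s (fun e => y (te e) - y (he e))) (e : E) :
    ((if te e ∈ S then 1 else 0) - (if he e ∈ S then 1 else 0)) * s e =
      if (te e ∈ S ↔ he e ∈ S) then 0 else 1 := by
  by_cases ht : te e ∈ S <;> by_cases hh : he e ∈ S <;> simp only [ht, hh, if_true, if_false]
  · ring
  · rw [hs.eq_one_of_pos (sub_pos.2 (hS _ ht _ hh))]
    simp
  · rw [hs.eq_neg_one_of_neg (sub_neg.2 (hS _ hh _ ht))]
    simp
  · ring

theorem sum_mulVec_incidence_eq_card_cut [Fintype V] [DecidableEq V] [Fintype E]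
    {B : Matrix V E ℝ} (hloop : ∀ e, te e ≠ he e)
    (hB : ∀ i e, B i e = if i = te e then 1 else if i = he e then -1 else 0)
    (hS : ∀ i ∈ S, ∀ j ∉ S, y j < y i) (hs : SignSel s (fun e => y (te e) - y (he e))) :
    ∑ i ∈ S, (B *ᵥ s) i = #{e | ¬(te e ∈ S ↔ he e ∈ S)} := by
  rw [sum_mulVec_incidence hloop hB, sum_congr rfl fun e _ => edge_flow_eq_ite_crosses hS hs e,
    card_filter, Nat.cast_sum]
  refine sum_congr rfl fun e _ => ?_
  split_ifs <;> simp_all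

lemma exists_cut_edge
    (hconn : (SimpleGraph.fromRel (fun i j => ∃ e, te e = i ∧ he e = j)).Connected)
    {a b : V} (ha : a ∈ S) (hb : b ∉ S) : ∃ e, ¬(te e ∈ S ↔ he e ∈ S) := by
  obtain ⟨w⟩ := hconn.preconnected a b
  obtain ⟨d, -, hd₁, hd₂⟩ := w.exists_boundary_dart (S : Set V) ha hb
  obtain ⟨-, ⟨e, h₁, h₂⟩ | ⟨e, h₁, h₂⟩⟩ := SimpleGraph.fromRel_adj _ _ _ |>.1 d.adj
  · exact ⟨e, by simp_all⟩
  · exact ⟨e, by simp_all⟩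

end Incidence

lemma lt_of_mem_of_notMem_argmax {V : Type*} {y : V → ℝ} {S : Finset V}
    (hS : ∀ i, i ∈ S ↔ ∀ ℓ, y ℓ ≤ y i) {i j : V} (hi : i ∈ S) (hj : j ∉ S) : y j < y i := by
  obtain ⟨ℓ, hℓ⟩ := not_forall.1 ((hS j).not.1 hj)
  exact (not_le.1 hℓ).trans_le ((hS i).1 hi ℓ)

/-- argmax boundary-flow lemma. `te e`/`he e` are the tail/head
of edge `e`, `B` is the incidence matrix, and the underlying undirected graph
is connected. For a non-constant `y` and any sign-selection `s` for `Bᵀ y`,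
the entries of `B s` summed over the argmax set of `y` are at least 1. -/
theorem argmax_boundary_flow {n m : ℕ}
    (te he : Fin m → Fin n) (hloop : ∀ e, te e ≠ he e)
    (hconn : (SimpleGraph.fromRel (fun i j => ∃ e, te e = i ∧ he e = j)).Connected)
    (B : Matrix (Fin n) (Fin m) ℝ)
    (hB : ∀ i e, B i e = if i = te e then 1 else if i = he e then -1 else 0)
    (y : Fin n → ℝ) (hy : ∃ i j, y i ≠ y j)
    (s : Fin m → ℝ) (hs : SignSel s (fun e => ∑ i, B i e * y i)) :
    1 ≤ ∑ i ∈ Finset.univ.filter (fun i => ∀ ℓ, y ℓ ≤ y i), B.mulVec s i := by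
  let α := univ.filter (fun i => ∀ ℓ, y ℓ ≤ y i)
  have hα : ∀ i, i ∈ α ↔ ∀ ℓ, y ℓ ≤ y i := by simp [α]
  obtain ⟨i₀, j₀, hij⟩ := hy
  have : Nonempty (Fin n) := ⟨i₀⟩
  obtain ⟨a, -, ha⟩ := exists_max_image univ y univ_nonempty
  obtain ⟨b, hb⟩ : ∃ b, b ∉ α := by
    by_contra! h
    exact hij (le_antisymm ((hα j₀).1 (h j₀) i₀) ((hα i₀).1 (h i₀) j₀))
  have hz : (fun e => ∑ i, B i e * y i) = fun e => y (te e) - y (he e) := funext fun e => by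
    rw [← vecMul_incidence hloop hB y e]
    simp only [vecMul, dotProduct, mul_comm]
  obtain ⟨e, hcut⟩ := exists_cut_edge hconn ((hα a).2 fun ℓ => ha ℓ (mem_univ ℓ)) hb
  rw [sum_mulVec_incidence_eq_card_cut hloop hB
    (fun i hi j hj => lt_of_mem_of_notMem_argmax hα hi hj) (hz ▸ hs)]
  exact_mod_cast card_pos.2 ⟨e, by simpa using hcut⟩
end
end

section
/- Lipschitz continuity of the transition matrix map on balls of radius less than π: for every r < π, the map x ↦ L_x (with L_0 := I₃) is Lipschitz continuous on the closed ball {x ∈ ℝ³ : ‖x‖₂ ≤ r}, i.e., there exists K ≥ 0 such that ‖L_x − L_y‖ ≤ K ‖x − y‖₂ for all x, y with ‖x‖₂ ≤ r and ‖y‖₂ ≤ r. -/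
open Matrix Real

noncomputable section

/-- The Frobenius norm on 3×3 real matrices. -/
def fnorm (M : Matrix (Fin 3) (Fin 3) ℝ) : ℝ := Real.sqrt (∑ i, ∑ j, M i j ^ 2)

/-! Since `sinc` is even, `sinc θ = S (θ ^ 2)` for the entire function `S` given by the power
series `∑ (-1)ⁿ tⁿ / (2n+1)!`. Hence `c θ` and `(1 - c θ) / θ ^ 2` are analytic functions of
`t = θ ^ 2` as long as `sinc (θ / 2) ≠ 0`: the second is minus the difference quotient of the first
at `t = 0`. So for `‖x‖ < 2π` the matrix `L_x` is given by one formula, smooth in `x` (also at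
`x = 0`), and a `C¹` map is Lipschitz on the compact convex ball. -/
open FormalMultilinearSeries Metric
open scoped Nat

def sincSqrtCoeff (n : ℕ) : ℝ := (-1) ^ n / (2 * n + 1)!

def sincSqrt : ℝ → ℝ := ofScalarsSum sincSqrtCoeff

lemma sincSqrtCoeff_ne_zero (n : ℕ) : sincSqrtCoeff n ≠ 0 :=
  div_ne_zero (pow_ne_zero _ (by norm_num)) (by positivity)

lemma norm_sincSqrtCoeff_succ_div (n : ℕ) :
    ‖sincSqrtCoeff (n + 1)‖ / ‖sincSqrtCoeff n‖ = 1 / ((2 * n + 2) * (2 * n + 3)) := by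
  have hfact : (2 * (n + 1) + 1)! = (2 * n + 3) * ((2 * n + 2) * (2 * n + 1)!) := by
    rw [show 2 * (n + 1) + 1 = (2 * n + 1) + 1 + 1 by ring, Nat.factorial_succ,
      Nat.factorial_succ]
  simp only [sincSqrtCoeff, norm_div, norm_pow, norm_neg, norm_one, one_pow,
    Real.norm_natCast, hfact]
  push_cast
  field_simp

lemma radius_ofScalars_sincSqrtCoeff : (ofScalars ℝ sincSqrtCoeff).radius = ⊤ := by
  refine ofScalars_radius_eq_top_of_tendsto ℝ _ (.of_forall sincSqrtCoeff_ne_zero) ?_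
  simp_rw [Nat.succ_eq_add_one, norm_sincSqrtCoeff_succ_div]
  refine squeeze_zero (fun n => by positivity) (fun n => ?_)
    tendsto_one_div_add_atTop_nhds_zero_nat
  gcongr
  nlinarith

lemma hasFPowerSeriesOnBall_sincSqrt :
    HasFPowerSeriesOnBall sincSqrt (ofScalars ℝ sincSqrtCoeff) 0 ⊤ := by
  have := (ofScalars ℝ sincSqrtCoeff).hasFPowerSeriesOnBall
    (by simp [radius_ofScalars_sincSqrtCoeff])
  rwa [radius_ofScalars_sincSqrtCoeff] at this

lemma analyticAt_sincSqrt (t : ℝ) : AnalyticAt ℝ sincSqrt t :=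
  hasFPowerSeriesOnBall_sincSqrt.analyticAt_of_mem (by simp)

lemma hasSum_sincSqrt (t : ℝ) : HasSum (fun n => sincSqrtCoeff n * t ^ n) (sincSqrt t) := by
  simpa [ofScalars_apply_eq, mul_comm] using
    hasFPowerSeriesOnBall_sincSqrt.hasSum (y := t) (by simp)

lemma sincSqrt_sq (θ : ℝ) : sincSqrt (θ ^ 2) = _root_.sinc θ := by
  rcases eq_or_ne θ 0 with rfl | hθ
  · simpa [_root_.sinc, sincSqrtCoeff] using
      (hasSum_sincSqrt 0).unique (hasSum_single 0 fun n hn => by simp [hn])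
  rw [_root_.sinc, if_neg hθ, eq_div_iff hθ, mul_comm]
  have hterm (n : ℕ) : θ * (sincSqrtCoeff n * (θ ^ 2) ^ n)
      = (-1) ^ n * θ ^ (2 * n + 1) / (2 * n + 1)! := by
    rw [sincSqrtCoeff, ← pow_mul, pow_succ]
    ring
  refine ((hasSum_sincSqrt (θ ^ 2)).mul_left θ).unique ?_
  simp_rw [hterm]
  exact Real.hasSum_sin θ

lemma sincSqrt_zero : sincSqrt 0 = 1 := by
  simpa [_root_.sinc] using sincSqrt_sq 0

theorem AnalyticAt.dslope {𝕜 E : Type*} [NontriviallyNormedField 𝕜] [NormedAddCommGroup E]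
    [NormedSpace 𝕜 E] {f : 𝕜 → E} {a b : 𝕜} (ha : AnalyticAt 𝕜 f a) (hb : AnalyticAt 𝕜 f b) :
    AnalyticAt 𝕜 (dslope f a) b := by
  rcases eq_or_ne b a with rfl | hba
  · obtain ⟨p, hp⟩ := ha
    exact hp.has_fpower_series_dslope_fslope.analyticAt
  · refine AnalyticAt.congr ?_ (dslope_eventuallyEq_slope_of_ne f hba).symm
    simp only [slope_fun_def, vsub_eq_sub]
    exact ((analyticAt_id.sub analyticAt_const).inv (sub_ne_zero.2 hba)).smul
      (hb.sub analyticAt_const)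

lemma sinc_pos {θ : ℝ} (h0 : 0 ≤ θ) (hπ : θ < π) : 0 < _root_.sinc θ := by
  rcases h0.eq_or_lt with rfl | hθ
  · simp [_root_.sinc]
  · rw [_root_.sinc, if_neg hθ.ne']
    exact div_pos (Real.sin_pos_of_pos_of_lt_pi hθ hπ) hθ

def cfunOfSq (t : ℝ) : ℝ := sincSqrt t / sincSqrt (t / 4) ^ 2

lemma cfun_eq_cfunOfSq (θ : ℝ) : cfun θ = cfunOfSq (θ ^ 2) := by
  rw [cfun, cfunOfSq, sincSqrt_sq, show θ ^ 2 / 4 = (θ / 2) ^ 2 by ring, sincSqrt_sq]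

lemma cfunOfSq_zero : cfunOfSq 0 = 1 := by simp [cfunOfSq, sincSqrt_zero]

lemma one_sub_cfun_div_sq {θ : ℝ} (hθ : θ ≠ 0) :
    (1 - cfun θ) / θ ^ 2 = -dslope cfunOfSq 0 (θ ^ 2) := by
  rw [dslope_of_ne _ (pow_ne_zero 2 hθ), slope_def_field, cfun_eq_cfunOfSq, cfunOfSq_zero]
  ring

lemma analyticAt_cfunOfSq {t : ℝ} (ht : sincSqrt (t / 4) ≠ 0) : AnalyticAt ℝ cfunOfSq t :=
  (analyticAt_sincSqrt t).div
    (((analyticAt_sincSqrt (t / 4)).comp (f := fun s => s / 4) (x := t)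
      (analyticAt_id.div_const)).pow 2) (pow_ne_zero 2 ht)

lemma hatm_zero : hatm 0 = 0 := by
  ext i j
  fin_cases i <;> fin_cases j <;> simp [hatm]

def LmatAnalytic (v : EuclideanSpace ℝ (Fin 3)) : Matrix (Fin 3) (Fin 3) ℝ :=
  cfunOfSq (‖v‖ ^ 2) • 1 - dslope cfunOfSq 0 (‖v‖ ^ 2) • vecMulVec v.ofLp v.ofLp
    + (1 / 2 : ℝ) • hatm v.ofLp

lemma norm2_eq_norm_toLp (x : Fin 3 → ℝ) : norm2 x = ‖WithLp.toLp 2 x‖ := by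
  simp [EuclideanSpace.norm_eq, norm2]

lemma Lmat_eq_LmatAnalytic (x : Fin 3 → ℝ) : Lmat x = LmatAnalytic (WithLp.toLp 2 x) := by
  rcases eq_or_ne x 0 with rfl | hx
  · simp [Lmat, LmatAnalytic, cfunOfSq_zero, hatm_zero]
  have hθ : norm2 x ≠ 0 := by simpa [norm2_eq_norm_toLp] using hx
  rw [Lmat, if_neg hx, LmatAnalytic, ← norm2_eq_norm_toLp, ← cfun_eq_cfunOfSq,
    one_sub_cfun_div_sq hθ, neg_smul, ← sub_eq_add_neg]

attribute [local instance] Matrix.normedAddCommGroup Matrix.normedSpace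

lemma contDiff_vecMulVec_self {m : Type*} [Fintype m] {n : WithTop ℕ∞} :
    ContDiff ℝ n (fun x : m → ℝ => vecMulVec x x) :=
  contDiff_pi.2 fun i => contDiff_pi.2 fun j => by simp only [vecMulVec_apply]; fun_prop

lemma contDiff_hatm {n : WithTop ℕ∞} : ContDiff ℝ n hatm :=
  contDiff_pi.2 fun i => contDiff_pi.2 fun j => by
    fin_cases i <;> fin_cases j <;>
      simp only [hatm, of_apply, cons_val', cons_val, cons_val_zero, cons_val_one,
        cons_val_fin_one, Fin.isValue, Fin.zero_eta, Fin.mk_one, Fin.reduceFinMk] <;> fun_prop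

lemma contDiffAt_LmatAnalytic {v : EuclideanSpace ℝ (Fin 3)} {n : WithTop ℕ∞}
    (hv : sincSqrt (‖v‖ ^ 2 / 4) ≠ 0) : ContDiffAt ℝ n LmatAnalytic v := by
  have hc := (analyticAt_cfunOfSq hv).contDiffAt (n := n)
  have hd := ((analyticAt_cfunOfSq (t := 0) (by simp [sincSqrt_zero])).dslope
    (analyticAt_cfunOfSq hv)).contDiffAt (n := n)
  have hsq : ContDiffAt ℝ n (fun v : EuclideanSpace ℝ (Fin 3) => ‖v‖ ^ 2) v :=
    contDiff_norm_sq ℝ |>.contDiffAt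
  have hofLp : ContDiff ℝ n (fun v : EuclideanSpace ℝ (Fin 3) => v.ofLp) := PiLp.contDiff_ofLp
  exact ((hc.comp v hsq).smul (contDiffAt_const (c := (1 : Matrix (Fin 3) (Fin 3) ℝ)))).sub
    ((hd.comp v hsq).smul (contDiff_vecMulVec_self.comp hofLp).contDiffAt) |>.add
    (contDiffAt_const (c := (1 / 2 : ℝ)) |>.smul (contDiff_hatm.comp hofLp).contDiffAt)

lemma exists_lipschitzOnWith_LmatAnalytic {r : ℝ} (hr : r < 2 * π) :
    ∃ K, LipschitzOnWith K LmatAnalytic (closedBall 0 r) := by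
  refine ContDiffOn.exists_lipschitzOnWith (n := 1) (fun v hv => ?_) one_ne_zero
    (convex_closedBall 0 r) (isCompact_closedBall 0 r)
  refine (contDiffAt_LmatAnalytic ?_).contDiffWithinAt
  have hv : ‖v‖ ≤ r := by simpa using hv
  rw [show ‖v‖ ^ 2 / 4 = (‖v‖ / 2) ^ 2 by ring, sincSqrt_sq]
  exact (sinc_pos (by positivity) (by linarith)).ne'

lemma fnorm_le_three_mul_norm (M : Matrix (Fin 3) (Fin 3) ℝ) : fnorm M ≤ 3 * ‖M‖ := by
  have hentry (i j : Fin 3) : M i j ^ 2 ≤ ‖M‖ ^ 2 := by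
    rw [← sq_abs, ← Real.norm_eq_abs]
    exact pow_le_pow_left₀ (norm_nonneg _) (norm_entry_le_entrywise_sup_norm M) 2
  calc fnorm M ≤ √(∑ _i : Fin 3, ∑ _j : Fin 3, ‖M‖ ^ 2) :=
        Real.sqrt_le_sqrt (Finset.sum_le_sum fun i _ => Finset.sum_le_sum fun j _ => hentry i j)
    _ = 3 * ‖M‖ := by
        rw [← Real.sqrt_sq (by positivity : 0 ≤ 3 * ‖M‖)]
        congr 1
        simp only [Finset.sum_const, Finset.card_univ, Fintype.card_fin, nsmul_eq_mul,
          Nat.cast_ofNat]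
        ring

/-- x ↦ Lₓ is Lipschitz on closed balls of radius r < π. -/
theorem transition_matrix_lipschitz (r : ℝ) (hr : r < Real.pi) :
    ∃ K : ℝ, 0 ≤ K ∧ ∀ x y : Fin 3 → ℝ, norm2 x ≤ r → norm2 y ≤ r →
      fnorm (Lmat x - Lmat y) ≤ K * norm2 (x - y) := by
  obtain ⟨K, hK⟩ := exists_lipschitzOnWith_LmatAnalytic (r := r) (by linarith [pi_pos])
  refine ⟨3 * K, by positivity, fun x y hx hy => ?_⟩
  rw [norm2_eq_norm_toLp] at hx hy
  have hxy := hK.dist_le_mul _ (mem_closedBall_zero_iff.2 hx) _ (mem_closedBall_zero_iff.2 hy)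
  rw [dist_eq_norm, dist_eq_norm, ← WithLp.toLp_sub, ← norm2_eq_norm_toLp,
    ← Lmat_eq_LmatAnalytic, ← Lmat_eq_LmatAnalytic] at hxy
  calc fnorm (Lmat x - Lmat y) ≤ 3 * ‖Lmat x - Lmat y‖ := fnorm_le_three_mul_norm _
    _ ≤ 3 * (K * norm2 (x - y)) := by gcongr
    _ = 3 * K * norm2 (x - y) := by ring
end
end
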